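/- Let G = (V, E, src, tgt, v0, S, 𝕐, λ) be a world graph, M ⊆ S a sensor selection, I = (Q, E, δ, q0, F) an itinerary DFA over G, and S_{G,I,M} their signature automaton. Then the language of the signature automaton is exactly the set of signatures of walks conforming to the itinerary: L(S_{G,I,M}) = { β_G(w, M) : w ∈ Walks(G) ∩ L(I) }. -/

import Mathlib

attribute [local instance] Classical.propDecidable

/-- A world graph: an edge-labelled directed multigraph with an initial vertex,
a nonempty finite set of sensors, pairwise disjoint event sets for the sensors,
and a labelling of edges by sets of events drawn from the sensors' event sets. -/
structure WorldGraph (V E S Ev : Type) where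
  src : E → V
  tgt : E → V
  v0 : V
  sensors : Finset S
  sensors_nonempty : sensors.Nonempty
  events : S → Set Ev
  events_disjoint : ∀ s ∈ sensors, ∀ t ∈ sensors, s ≠ t → Disjoint (events s) (events t)
  lab : E → Set Ev
  lab_sub : ∀ e, lab e ⊆ ⋃ s ∈ sensors, events s

namespace WorldGraph

variable {V E S Ev Q : Type}

/-- A walk: a string of edges starting at the initial vertex with matching endpoints. -/
def IsWalk (G : WorldGraph V E S Ev) (w : List E) : Prop :=
  (∀ e ∈ w.head?, G.src e = G.v0) ∧ w.Chain' fun a b => G.tgt a = G.src b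

/-- The set of all events producible by sensors in the selection `M`. -/
def YM (G : WorldGraph V E S Ev) (M : Finset S) : Set Ev := ⋃ s ∈ M, G.events s

/-- The sensor labelling function: `some (λ(e) ∩ Y_M)` if that set is nonempty, else
`none` (representing the empty symbol ε). -/
noncomputable def labM (G : WorldGraph V E S Ev) (M : Finset S) (e : E) : Option (Set Ev) :=
  if (G.lab e ∩ G.YM M).Nonempty then some (G.lab e ∩ G.YM M) else none

/-- The signature of a walk: the string of nonempty sensor labels, ε symbols dropped. -/
noncomputable def signature (G : WorldGraph V E S Ev) (M : Finset S) (w : List E) :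
    List (Set Ev) :=
  w.filterMap (G.labM M)

/-- One step of the (partial) product automaton of world graph `G` and itinerary DFA `I`. -/
noncomputable def prodStep (G : WorldGraph V E S Ev) (I : DFA E Q) (p : Q × V) (e : E) :
    Option (Q × V) :=
  if G.src e = p.2 then some (I.step p.1 e, G.tgt e) else none

/-- Tracing a string of edges through the product automaton from the initial state;
`none` means some transition was undefined (⊥). -/
noncomputable def prodEval (G : WorldGraph V E S Ev) (I : DFA E Q) (w : List E) :
    Option (Q × V) :=
  w.foldl (fun o e => o.bind fun p => G.prodStep I p e) (some (I.start, G.v0))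

/-- The language of the product automaton: strings traceable from `(q0, v0)` without
producing ⊥ which arrive at an accepting state. -/
def ProdAccepts (G : WorldGraph V E S Ev) (I : DFA E Q) (w : List E) : Prop :=
  ∃ p, G.prodEval I w = some p ∧ p.1 ∈ I.accept

/-- The signature automaton: an ε-NFA over the alphabet of sensor labels, with the
states, initial state, and accepting states of the product automaton. -/
noncomputable def sigNFA (G : WorldGraph V E S Ev) (I : DFA E Q) (M : Finset S) :
    εNFA (Set Ev) (Q × V) where
  step := fun p σ => { p' | ∃ e, G.prodStep I p e = some p' ∧ G.labM M e = σ }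
  start := {(I.start, G.v0)}
  accept := { p | p.1 ∈ I.accept }

/-- `M` satisfies the discrimination constraint `[I¹, I²]^≁`. -/
def SatisfiesDiscrimination {Q₁ Q₂ : Type} (G : WorldGraph V E S Ev)
    (I₁ : DFA E Q₁) (I₂ : DFA E Q₂) (M : Finset S) : Prop :=
  ¬ ∃ w₁ w₂ : List E, (G.IsWalk w₁ ∧ w₁ ∈ I₁.accepts) ∧ (G.IsWalk w₂ ∧ w₂ ∈ I₂.accepts) ∧
      G.signature M w₁ = G.signature M w₂

/-- `M` satisfies the conflation constraint `(I¹, I²)^~`. -/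
def SatisfiesConflation {Q₁ Q₂ : Type} (G : WorldGraph V E S Ev)
    (I₁ : DFA E Q₁) (I₂ : DFA E Q₂) (M : Finset S) : Prop :=
  ∀ w : List E, G.IsWalk w → w ∈ I₁.accepts →
    ∃ c : List E, G.IsWalk c ∧ c ∈ I₂.accepts ∧ G.signature M w = G.signature M c

end WorldGraph

/-!
A path of the signature automaton is a run of the product automaton in which each edge `e` is
read as the symbol `λ_M(e)`, the edges with empty sensor label being the ε-moves; the word it
accepts is therefore the signature of the edge string. The product automaton in turn runs
exactly on the walks of `G`, since its vertex component is undefined as soon as consecutive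
edges stop matching, while its DFA component runs `I`; so its language is `Walks(G) ∩ L(I)`.
-/

namespace WorldGraph

variable {V E S Ev Q : Type} (G : WorldGraph V E S Ev)

noncomputable def endV (w : List E) : V :=
  w.getLast?.elim G.v0 G.tgt

theorem endV_append_singleton (w : List E) (e : E) : G.endV (w ++ [e]) = G.tgt e := by
  simp [endV]

theorem isWalk_iff (w : List E) :
    G.IsWalk w ↔ (∀ e ∈ w.head?, G.src e = G.v0) ∧ w.IsChain fun a b => G.tgt a = G.src b :=
  Iff.rfl

theorem isWalk_nil : G.IsWalk [] := by
  simp [isWalk_iff]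

theorem isWalk_append_singleton (w : List E) (e : E) :
    G.IsWalk (w ++ [e]) ↔ G.IsWalk w ∧ G.src e = G.endV w := by
  cases w with
  | nil => simp [isWalk_iff, endV, and_comm]
  | cons a t =>
    obtain ⟨l, hl⟩ : ∃ l, (a :: t).getLast? = some l :=
      ⟨_, List.getLast?_eq_getLast_of_ne_nil (by simp)⟩
    rw [isWalk_iff, isWalk_iff, List.isChain_append]
    simp [endV, hl, eq_comm, and_assoc]

theorem signature_eq_reduceOption (M : Finset S) (w : List E) :
    G.signature M w = (w.map (G.labM M)).reduceOption := by
  simp [signature, List.reduceOption, List.filterMap_map]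

theorem prodEval_append_singleton (I : DFA E Q) (w : List E) (e : E) :
    G.prodEval I (w ++ [e]) = (G.prodEval I w).bind fun p => G.prodStep I p e := by
  simp [prodEval]

theorem prodEval_eq (I : DFA E Q) (w : List E) :
    G.prodEval I w = if G.IsWalk w then some (I.eval w, G.endV w) else none := by
  induction w using List.reverseRecOn with
  | nil => simp [prodEval, isWalk_nil, endV]
  | append_singleton w e ih =>
    rw [prodEval_append_singleton, ih, isWalk_append_singleton]
    by_cases hw : G.IsWalk w <;> simp [hw, prodStep, DFA.eval_append_singleton, endV_append_singleton]

theorem prodAccepts_iff (I : DFA E Q) (w : List E) :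
    G.ProdAccepts I w ↔ G.IsWalk w ∧ w ∈ I.accepts := by
  rw [ProdAccepts, prodEval_eq]
  split_ifs with hw <;> simp [hw, DFA.mem_accepts]

theorem isPath_sigNFA_iff (I : DFA E Q) (M : Finset S) (p : Q × V)
    (x : List (Option (Set Ev))) :
    (G.sigNFA I M).IsPath (I.start, G.v0) p x ↔
      ∃ w, G.prodEval I w = some p ∧ w.map (G.labM M) = x := by
  induction x using List.reverseRecOn generalizing p with
  | nil => simp [prodEval]
  | append_singleton x a ih =>
    simp only [εNFA.isPath_append, εNFA.isPath_singleton, ih, List.map_eq_append_iff,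
      List.map_eq_singleton_iff]
    constructor
    · rintro ⟨t, ⟨w, hw, rfl⟩, e, he, rfl⟩
      exact ⟨w ++ [e], by simp [prodEval_append_singleton, hw, he], w, [e], rfl, rfl, e, rfl, rfl⟩
    · rintro ⟨_, hp, w, _, rfl, rfl, e, rfl, rfl⟩
      rw [prodEval_append_singleton, Option.bind_eq_some_iff] at hp
      obtain ⟨t, hw, he⟩ := hp
      exact ⟨t, ⟨w, hw, rfl⟩, e, he, rfl⟩

theorem mem_sigNFA_accepts_iff (I : DFA E Q) (M : Finset S) (x : List (Set Ev)) :
    x ∈ (G.sigNFA I M).accepts ↔ ∃ w, G.ProdAccepts I w ∧ G.signature M w = x := by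
  rw [εNFA.mem_accepts_iff_exists_path]
  constructor
  · rintro ⟨_, p, _, rfl, hp, rfl, hpath⟩
    obtain ⟨w, hw, rfl⟩ := (G.isPath_sigNFA_iff I M p _).mp hpath
    exact ⟨w, ⟨p, hw, hp⟩, G.signature_eq_reduceOption M w⟩
  · rintro ⟨w, ⟨p, hw, hp⟩, rfl⟩
    exact ⟨_, p, _, rfl, hp, (G.signature_eq_reduceOption M w).symm,
      (G.isPath_sigNFA_iff I M p _).mpr ⟨w, hw, rfl⟩⟩

end WorldGraph

theorem sigNFA_accepts_eq_signatures_general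
    (V E S Ev Q : Type) (G : WorldGraph V E S Ev) (I : DFA E Q)
    (M : Finset S) :
    (G.sigNFA I M).accepts =
      { x : List (Set Ev) | ∃ w : List E, G.IsWalk w ∧ w ∈ I.accepts ∧ G.signature M w = x } := by
  ext x
  simp only [G.mem_sigNFA_accepts_iff, G.prodAccepts_iff, and_assoc]
  rfl

/-- The language of the signature automaton is exactly the set of
signatures of walks conforming to the itinerary. -/
theorem sigNFA_accepts_eq_signatures
    (V E S Ev Q : Type) (G : WorldGraph V E S Ev) (I : DFA E Q)
    (M : Finset S) (hM : M ⊆ G.sensors) :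
    (G.sigNFA I M).accepts =
      { x : List (Set Ev) | ∃ w : List E, G.IsWalk w ∧ w ∈ I.accepts ∧ G.signature M w = x } :=
  sigNFA_accepts_eq_signatures_general V E S Ev Q G I M
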